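/- There is a constant C such that for all x, x₀ ∈ ℝ² with r₀ = |x₀| ≤ r/2 (r = |x| > 0, r₁ = |x - x₀|): |e^{r - r₀ - r₁} - e^{-r₀(1 - cos(θ - θ₀))}| ≤ C e^{-r₀(1 - cos(θ - θ₀))} · r₀² (θ - θ₀)² / r. -/

import Mathlib

/-!
With `Δ = θ - θ₀` and `a = r - r₀ cos Δ`, the law of cosines gives `r₁² = a² + (r₀ sin Δ)²`, so
`r - r₀ - r₁ = -r₀ (1 - cos Δ) - δ` with `δ = r₁ - a = (r₀ sin Δ)² / (r₁ + a) ≥ 0`.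
Since `r₁ + a ≥ r` when `r₀ ≤ r / 2`, and `|1 - e^{-δ}| ≤ δ`, the claim holds with `C = 1`.
-/

open Real

/-- The point with Cartesian coordinates `(a, b)` in the Euclidean plane. -/
noncomputable def pt (a b : ℝ) : EuclideanSpace ℝ (Fin 2) :=
  (WithLp.equiv 2 (Fin 2 → ℝ)).symm ![a, b]

lemma norm_pt_sub_pt_sq (a b c d : ℝ) : ‖pt a b - pt c d‖ ^ 2 = (a - c) ^ 2 + (b - d) ^ 2 := by
  simp only [pt, WithLp.equiv_symm_apply, EuclideanSpace.norm_eq, PiLp.sub_apply, norm_eq_abs,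
    sq_abs, Fin.sum_univ_two, Matrix.cons_val_zero, Matrix.cons_val_one]
  rw [Real.sq_sqrt (by positivity)]

lemma norm_pt_polar_sub_pt_polar_sq (r r₀ θ θ₀ : ℝ) :
    ‖pt (r * cos θ) (r * sin θ) - pt (r₀ * cos θ₀) (r₀ * sin θ₀)‖ ^ 2 =
      (r - r₀ * cos (θ - θ₀)) ^ 2 + (r₀ * sin (θ - θ₀)) ^ 2 := by
  rw [norm_pt_sub_pt_sq, cos_sub, sin_sub]
  linear_combination (r ^ 2 - r₀ ^ 2 * (sin θ₀ ^ 2 + cos θ₀ ^ 2)) * sin_sq_add_cos_sq θ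

lemma le_of_sq_eq_sq_add_sq {t a s : ℝ} (ht : 0 ≤ t) (h : t ^ 2 = a ^ 2 + s ^ 2) : a ≤ t :=
  (abs_le_of_sq_le_sq' (by nlinarith [sq_nonneg s]) ht).2

lemma sub_le_sq_div_of_sq_eq_sq_add_sq {t a s ρ : ℝ} (h : t ^ 2 = a ^ 2 + s ^ 2) (hρ : 0 < ρ)
    (hρt : ρ ≤ t + a) : t - a ≤ s ^ 2 / ρ := by
  have hprod : (t - a) * (t + a) = s ^ 2 := by linear_combination h
  have hnonneg : 0 ≤ t - a := nonneg_of_mul_nonneg_left (hprod ▸ sq_nonneg s) (hρ.trans_le hρt)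
  rw [le_div_iff₀ hρ, ← hprod]
  exact mul_le_mul_of_nonneg_left hρt hnonneg

lemma abs_exp_sub_sub_exp_le {A δ : ℝ} (hδ : 0 ≤ δ) : |exp (A - δ) - exp A| ≤ exp A * δ := by
  have hsplit : exp (A - δ) - exp A = -(exp A * (1 - exp (-δ))) := by
    rw [sub_eq_add_neg A δ, exp_add]; ring
  rw [hsplit, abs_neg, abs_of_nonneg (mul_nonneg (exp_pos A).le
    (sub_nonneg.2 (exp_le_one_iff.2 (neg_nonpos.2 hδ))))]
  exact mul_le_mul_of_nonneg_left (by linarith [one_sub_le_exp_neg δ]) (exp_pos A).le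

/-- There is C such that if x = r(cos θ, sin θ), x₀ = r₀(cos θ₀, sin θ₀)
with r > 0, 0 ≤ r₀ ≤ r/2 and r₁ = ‖x - x₀‖, then
|e^{r - r₀ - r₁} - e^{-r₀(1 - cos(θ - θ₀))}|
  ≤ C e^{-r₀(1 - cos(θ - θ₀))} r₀² (θ - θ₀)² / r. -/
theorem stmt17 :
    ∃ C : ℝ, ∀ r r₀ θ θ₀ : ℝ, 0 < r → 0 ≤ r₀ → r₀ ≤ r / 2 →
      ∀ r₁ : ℝ, r₁ = ‖pt (r * Real.cos θ) (r * Real.sin θ) -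
          pt (r₀ * Real.cos θ₀) (r₀ * Real.sin θ₀)‖ →
        |Real.exp (r - r₀ - r₁) - Real.exp (-r₀ * (1 - Real.cos (θ - θ₀)))| ≤
          C * Real.exp (-r₀ * (1 - Real.cos (θ - θ₀))) *
            (r₀ ^ 2 * (θ - θ₀) ^ 2) / r := by
  refine ⟨1, fun r r₀ θ θ₀ hr hr₀ hr₀r r₁ hr₁ => ?_⟩
  set a := r - r₀ * cos (θ - θ₀)
  set E := exp (-r₀ * (1 - cos (θ - θ₀)))
  have hsq : r₁ ^ 2 = a ^ 2 + (r₀ * sin (θ - θ₀)) ^ 2 :=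
    hr₁ ▸ norm_pt_polar_sub_pt_polar_sq r r₀ θ θ₀
  have ha : r - r₀ ≤ a := by
    have := mul_le_of_le_one_right hr₀ (cos_le_one (θ - θ₀))
    linarith
  have har₁ : a ≤ r₁ := le_of_sq_eq_sq_add_sq (hr₁ ▸ norm_nonneg _) hsq
  have hδ : r₁ - a ≤ (r₀ * sin (θ - θ₀)) ^ 2 / r :=
    sub_le_sq_div_of_sq_eq_sq_add_sq hsq hr (by linarith)
  have hsin : (r₀ * sin (θ - θ₀)) ^ 2 ≤ r₀ ^ 2 * (θ - θ₀) ^ 2 := by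
    rw [mul_pow]
    exact mul_le_mul_of_nonneg_left sin_sq_le_sq (sq_nonneg r₀)
  calc |exp (r - r₀ - r₁) - E|
      = |exp (-r₀ * (1 - cos (θ - θ₀)) - (r₁ - a)) - E| := by congr 3; ring
    _ ≤ E * (r₁ - a) := abs_exp_sub_sub_exp_le (by linarith)
    _ ≤ E * (r₀ ^ 2 * (θ - θ₀) ^ 2 / r) :=
        mul_le_mul_of_nonneg_left (hδ.trans (by gcongr)) (exp_pos _).le
    _ = 1 * E * (r₀ ^ 2 * (θ - θ₀) ^ 2) / r := by ring
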